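/- Let A be a unital Banach algebra with ‖1‖ = 1, and let L be a Leibniz seminorm on A such that L(1) < ∞ and the set {a ∈ A : L(a) ≤ 1} is closed in A. Set A^f = {a ∈ A : L(a) < ∞}. Then: (i) if c ∈ A^f and ‖1 − c‖ < 1, then c is invertible in A and c⁻¹ ∈ A^f; (ii) more generally, if c ∈ A^f is invertible in the norm closure of A^f in A, then c⁻¹ ∈ A^f; that is, A^f is a spectrally stable subalgebra of its norm closure in A. -/

import Mathlib

open scoped ENNReal

/-- A `[0,∞]`-valued seminorm on a normed algebra. -/
def IsESeminorm {A : Type*} [NormedRing A] [NormedAlgebra ℂ A] (L : A → ℝ≥0∞) : Prop :=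
  L 0 = 0 ∧ (∀ t : ℂ, t ≠ 0 → ∀ a : A, L (t • a) = (‖t‖₊ : ℝ≥0∞) * L a) ∧
    ∀ a b : A, L (a + b) ≤ L a + L b

/-- The Leibniz property. -/
def IsLeibniz {A : Type*} [NormedRing A] [NormedAlgebra ℂ A] (L : A → ℝ≥0∞) : Prop :=
  ∀ a b : A, L (a * b) ≤ L a * (‖b‖₊ : ℝ≥0∞) + (‖a‖₊ : ℝ≥0∞) * L b

open scoped NNReal

/-!
Part (i) is the Neumann series: for `x = 1 - c` the Leibniz rule gives
`L(x^(n+1)) ≤ (n+1) ‖x‖ⁿ L(x)`, so `∑ L(xⁿ) < ∞`, and since the sublevel sets of `L` are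
closed, `L` is finite at the sum `c⁻¹ = ∑ xⁿ` of the series. For part (ii), if `c b = b c = 1`
and `a ∈ A^f` is close enough to `b`, then `‖1 - a c‖ < 1`, so by (i) `a c` has an inverse
`d ∈ A^f`, and `b = d a ∈ A^f`.
-/

theorem ENNReal.tsum_succ_mul_geometric_ne_top {r : ℝ≥0} (hr : r < 1) :
    ∑' n : ℕ, ((n : ℝ≥0∞) + 1) * (r : ℝ≥0∞) ^ n ≠ ⊤ := by
  have hr' : ‖(r : ℝ)‖ < 1 := by simpa using hr
  have hsummable : Summable fun n : ℕ => ((n : ℝ) + 1) * (r : ℝ) ^ n := by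
    simpa [add_mul] using
      (summable_pow_mul_geometric_of_norm_lt_one 1 hr').add (summable_geometric_of_norm_lt_one hr')
  simpa using (ENNReal.tsum_coe_ne_top_iff_summable_coe
    (f := fun n : ℕ => ((n : ℝ≥0) + 1) * r ^ n)).2 (by simpa using hsummable)

theorem exists_mem_norm_one_sub_mul_lt_one {R : Type*} [NormedRing R] {s : Set R} {b c : R}
    (hb : b ∈ closure s) (hbc : b * c = 1) : ∃ a ∈ s, ‖1 - a * c‖ < 1 := by
  obtain ⟨a, ha, hba⟩ := Metric.mem_closure_iff.1 hb (‖c‖ + 1)⁻¹ (by positivity)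
  refine ⟨a, ha, ?_⟩
  calc ‖1 - a * c‖ = ‖(b - a) * c‖ := by rw [sub_mul, hbc]
    _ ≤ ‖b - a‖ * ‖c‖ := norm_mul_le _ _
    _ ≤ (‖c‖ + 1)⁻¹ * ‖c‖ := by
        gcongr
        rw [← dist_eq_norm]
        exact hba.le
    _ < 1 := by
        rw [inv_mul_lt_one₀ (by positivity)]
        linarith

section

variable {A : Type*} [NormedRing A] [NormedAlgebra ℂ A] {L : A → ℝ≥0∞}

namespace IsESeminorm

theorem map_zero (hL : IsESeminorm L) : L 0 = 0 := hL.1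

theorem map_smul (hL : IsESeminorm L) {t : ℂ} (ht : t ≠ 0) (a : A) :
    L (t • a) = (‖t‖₊ : ℝ≥0∞) * L a :=
  hL.2.1 t ht a

theorem map_add_le (hL : IsESeminorm L) (a b : A) : L (a + b) ≤ L a + L b := hL.2.2 a b

theorem map_neg (hL : IsESeminorm L) (a : A) : L (-a) = L a := by
  simpa using hL.map_smul (t := -1) (by norm_num) a

theorem map_sub_le (hL : IsESeminorm L) (a b : A) : L (a - b) ≤ L a + L b := by
  simpa [sub_eq_add_neg, hL.map_neg] using hL.map_add_le a (-b)

theorem map_sum_le (hL : IsESeminorm L) {ι : Type*} (s : Finset ι) (f : ι → A) :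
    L (∑ i ∈ s, f i) ≤ ∑ i ∈ s, L (f i) :=
  Finset.le_sum_of_subadditive L hL.map_zero.le hL.map_add_le s f

theorem isClosed_setOf_le (hL : IsESeminorm L) (hclosed : IsClosed {a : A | L a ≤ 1})
    {r : ℝ≥0} (hr : r ≠ 0) : IsClosed {a : A | L a ≤ r} := by
  have ht : ((r : ℂ))⁻¹ ≠ 0 := by simpa using hr
  have hnorm : (‖((r : ℂ))⁻¹‖₊ : ℝ≥0∞) = (r : ℝ≥0∞)⁻¹ := by
    rw [nnnorm_inv, ENNReal.coe_inv (by simpa using hr)]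
    congr 2
    ext
    simp
  have hset : {a : A | L a ≤ r} = (fun a : A => ((r : ℂ))⁻¹ • a) ⁻¹' {a : A | L a ≤ 1} := by
    ext a
    simp only [Set.mem_ofPred_eq, Set.mem_preimage, hL.map_smul ht, hnorm]
    rw [ENNReal.inv_mul_le_iff (by simpa using hr) ENNReal.coe_ne_top, mul_one]
  rw [hset]
  exact hclosed.preimage (continuous_const_smul _)

theorem lt_top_of_hasSum (hL : IsESeminorm L) (hclosed : IsClosed {a : A | L a ≤ 1})
    {f : ℕ → A} {a : A} (hf : HasSum f a) (hfin : ∑' n, L (f n) ≠ ⊤) : L a < ⊤ := by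
  set M : ℝ≥0 := (∑' n, L (f n)).toNNReal + 1
  have hpartial : ∀ N, L (∑ i ∈ Finset.range N, f i) ≤ M := fun N =>
    calc L (∑ i ∈ Finset.range N, f i) ≤ ∑ i ∈ Finset.range N, L (f i) := hL.map_sum_le _ _
      _ ≤ ∑' n, L (f n) := ENNReal.sum_le_tsum _
      _ = (∑' n, L (f n)).toNNReal := (ENNReal.coe_toNNReal hfin).symm
      _ ≤ M := by gcongr; exact le_self_add
  have haM : L a ≤ M := (hL.isClosed_setOf_le hclosed (by positivity)).mem_of_tendsto
    hf.tendsto_sum_nat (Filter.Eventually.of_forall hpartial)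
  exact haM.trans_lt ENNReal.coe_lt_top

end IsESeminorm

namespace IsLeibniz

theorem mul_lt_top (hleib : IsLeibniz L) {a b : A} (ha : L a < ⊤) (hb : L b < ⊤) :
    L (a * b) < ⊤ :=
  (hleib a b).trans_lt <| ENNReal.add_lt_top.2
    ⟨ENNReal.mul_lt_top ha ENNReal.coe_lt_top, ENNReal.mul_lt_top ENNReal.coe_lt_top hb⟩

theorem pow_succ_le (hleib : IsLeibniz L) (x : A) (n : ℕ) :
    L (x ^ (n + 1)) ≤ ((n : ℝ≥0∞) + 1) * (‖x‖₊ : ℝ≥0∞) ^ n * L x := by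
  induction n with
  | zero => simp
  | succ n ih =>
    have hnorm : (‖x ^ (n + 1)‖₊ : ℝ≥0∞) ≤ (‖x‖₊ : ℝ≥0∞) ^ (n + 1) := by
      exact_mod_cast nnnorm_pow_le' x n.succ_pos
    calc L (x ^ (n + 1 + 1)) ≤ L x * ‖x ^ (n + 1)‖₊ + ‖x‖₊ * L (x ^ (n + 1)) := by
          rw [pow_succ' x (n + 1)]
          exact hleib x _
      _ ≤ L x * (‖x‖₊ : ℝ≥0∞) ^ (n + 1) + ‖x‖₊ * (((n : ℝ≥0∞) + 1) * ‖x‖₊ ^ n * L x) := by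
          gcongr
      _ = ((↑(n + 1) : ℝ≥0∞) + 1) * (‖x‖₊ : ℝ≥0∞) ^ (n + 1) * L x := by
          push_cast
          ring

theorem tsum_pow_ne_top (hleib : IsLeibniz L) (hL1 : L 1 < ⊤)
    {x : A} (hx : ‖x‖ < 1) (hLx : L x < ⊤) : ∑' n, L (x ^ n) ≠ ⊤ := by
  have hx' : ‖x‖₊ < 1 := by rwa [← NNReal.coe_lt_coe, coe_nnnorm, NNReal.coe_one]
  have htail : ∑' n, L (x ^ (n + 1)) ≠ ⊤ := by
    refine ne_top_of_le_ne_top ?_ (ENNReal.tsum_le_tsum fun n => hleib.pow_succ_le x n)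
    rw [ENNReal.tsum_mul_right]
    exact ENNReal.mul_ne_top (ENNReal.tsum_succ_mul_geometric_ne_top hx') hLx.ne
  rw [tsum_eq_zero_add' ENNReal.summable, pow_zero]
  exact ENNReal.add_ne_top.2 ⟨hL1.ne, htail⟩

end IsLeibniz

theorem IsESeminorm.exists_inverse_lt_top_of_norm_one_sub_lt_one
    [CompleteSpace A] (hL : IsESeminorm L) (hleib : IsLeibniz L) (hL1 : L 1 < ⊤)
    (hclosed : IsClosed {a : A | L a ≤ 1}) (c : A) (hc : L c < ⊤) (hnc : ‖1 - c‖ < 1) :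
    ∃ b : A, c * b = 1 ∧ b * c = 1 ∧ L b < ⊤ := by
  have hx : L (1 - c) < ⊤ := (hL.map_sub_le 1 c).trans_lt (ENNReal.add_lt_top.2 ⟨hL1, hc⟩)
  refine ⟨∑' n, (1 - c) ^ n, ?_, ?_, ?_⟩
  · simpa using mul_neg_geom_series (1 - c) hnc
  · simpa using geom_series_mul_neg (1 - c) hnc
  · exact hL.lt_top_of_hasSum hclosed (summable_geometric_of_norm_lt_one hnc).hasSum
      (hleib.tsum_pow_ne_top hL1 hnc hx)

end

theorem finite_part_spectrally_stable_in_closure_general {A : Type*} [NormedRing A]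
    [NormedAlgebra ℂ A] [CompleteSpace A]
    (L : A → ℝ≥0∞) (hsem : IsESeminorm L) (hleib : IsLeibniz L)
    (hL1 : L 1 < ⊤) (hclosed : IsClosed {a : A | L a ≤ 1}) :
    (∀ c : A, L c < ⊤ → ‖1 - c‖ < 1 →
      ∃ b : A, c * b = 1 ∧ b * c = 1 ∧ L b < ⊤) ∧
    (∀ c b : A, L c < ⊤ → b ∈ closure {a : A | L a < ⊤} →
      c * b = 1 → b * c = 1 → L b < ⊤) := by
  have part_one := hsem.exists_inverse_lt_top_of_norm_one_sub_lt_one hleib hL1 hclosed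
  refine ⟨part_one, fun c b hc hb hcb hbc => ?_⟩
  obtain ⟨a, ha, hac⟩ := exists_mem_norm_one_sub_mul_lt_one hb hbc
  obtain ⟨d, -, hd, hLd⟩ := part_one (a * c) (hleib.mul_lt_top ha hc) hac
  have hb_eq : d * a = b := left_inv_eq_right_inv (by rwa [mul_assoc]) hcb
  exact hb_eq ▸ hleib.mul_lt_top hLd ha

/-- Let `A` be a unital Banach algebra and `L` a closed Leibniz seminorm on `A` with
`L(1) < ∞`.  Set `A^f = {a : L(a) < ∞}`.  Then: (i) any `c ∈ A^f` with `‖1 − c‖ < 1` is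
invertible with inverse in `A^f`; (ii) any `c ∈ A^f` whose inverse lies in the norm closure
of `A^f` in fact has its inverse in `A^f` (so `A^f` is spectrally stable in its closure). -/
theorem finite_part_spectrally_stable_in_closure {A : Type*} [NormedRing A] [NormOneClass A]
    [NormedAlgebra ℂ A] [CompleteSpace A]
    (L : A → ℝ≥0∞) (hsem : IsESeminorm L) (hleib : IsLeibniz L)
    (hL1 : L 1 < ⊤) (hclosed : IsClosed {a : A | L a ≤ 1}) :
    (∀ c : A, L c < ⊤ → ‖1 - c‖ < 1 →
      ∃ b : A, c * b = 1 ∧ b * c = 1 ∧ L b < ⊤) ∧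
    (∀ c b : A, L c < ⊤ → b ∈ closure {a : A | L a < ⊤} →
      c * b = 1 → b * c = 1 → L b < ⊤) :=
  finite_part_spectrally_stable_in_closure_general L hsem hleib hL1 hclosed
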